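/- Let F be a C³ distribution function with density f = F′ on intervals I_j = [a_{j−1}, a_j] and I_{j+1} = [a_j, a_{j+1}] with a_{j−1} < a_j < a_{j+1}, f′ continuous, f″ continuous. Define r_i = (1/2)(F(a_i)+F(a_{i−1}))(a_i − a_{i−1}) − ∫_{a_{i−1}}^{a_i} F(u) du and Δ_i a = a_i − a_{i−1} for i = j, j+1. Then there exists a_j* ∈ I_j such that r_j/(Δ_j a)³ − r_{j+1}/(Δ_{j+1} a)³ ≤ −(1/12) f″(a_j*) Δ_j a + (1/24)( (sup_{I_j} f″) Δ_j a − (inf_{I_{j+1}} f″) Δ_{j+1} a ). -/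

import Mathlib

/-! Let r(t) be the trapezoid error of `F` on `[a, t]`. Then r(a) = r'(a) = 0 and
r''(t) = (t - a) f'(t) / 2. Since f'(t) ≤ f'(a) + (sup f'') (t - a), comparing r' and then r with
the polynomial that has the same initial values and second derivative
(t - a) (f'(a) + (sup f'') (t - a)) / 2 gives r(b) ≤ f'(a) Δ³/12 + (sup f'') Δ⁴/24, and
symmetrically r(b) ≥ f'(a) Δ³/12 + (inf f'') Δ⁴/24. Using the upper bound on `I_j` and the lower
bound on `I_{j+1}`, the normalized difference contains f'(a_{j-1}) - f'(a_j), which is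
-f''(a_j*) Δ_j a by the mean value theorem. -/

open Set

noncomputable def trapezoidError (F : ℝ → ℝ) (a b : ℝ) : ℝ :=
  (1 / 2) * (F b + F a) * (b - a) - ∫ u in a..b, F u

theorem trapezoidError_neg (F : ℝ → ℝ) (a b : ℝ) :
    trapezoidError (fun x => -F x) a b = -trapezoidError F a b := by
  simp only [trapezoidError, intervalIntegral.integral_neg]
  ring

section Comparison

variable {u v u' v' : ℝ → ℝ} {a b : ℝ}

theorem le_on_Icc_of_hasDerivAt_le (hu : ContinuousOn u (Icc a b))
    (hv : ContinuousOn v (Icc a b)) (hu' : ∀ t ∈ Ioo a b, HasDerivAt u (u' t) t)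
    (hv' : ∀ t ∈ Ioo a b, HasDerivAt v (v' t) t) (ha : u a ≤ v a)
    (h : ∀ t ∈ Ioo a b, u' t ≤ v' t) : ∀ t ∈ Icc a b, u t ≤ v t := by
  have hmono : MonotoneOn (fun t => v t - u t) (Icc a b) := by
    refine monotoneOn_of_hasDerivWithinAt_nonneg (f' := fun t => v' t - u' t) (convex_Icc a b)
      (hv.sub hu) (fun t ht => ?_) (fun t ht => ?_) <;> rw [interior_Icc] at ht
    · exact ((hv' t ht).sub (hu' t ht)).hasDerivWithinAt
    · exact sub_nonneg.2 (h t ht)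
  intro t ht
  have := hmono (left_mem_Icc.2 (ht.1.trans ht.2)) ht ht.1
  simp only at this
  linarith

theorem sub_le_mul_sub_of_hasDerivAt_le {C : ℝ} (hu : ∀ t ∈ Icc a b, HasDerivAt u (u' t) t)
    (hC : ∀ t ∈ Ioo a b, u' t ≤ C) : ∀ t ∈ Icc a b, u t - u a ≤ C * (t - a) := by
  have hline (t : ℝ) : HasDerivAt (fun s => u a + C * (s - a)) C t := by
    simpa using ((hasDerivAt_id t).sub_const a).const_mul C |>.const_add (u a)
  intro t ht
  have := le_on_Icc_of_hasDerivAt_le (fun s hs => (hu s hs).continuousAt.continuousWithinAt)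
    (by fun_prop) (fun s hs => hu s (Ioo_subset_Icc_self hs)) (fun s _ => hline s)
    (by simp) hC t ht
  linarith

theorem mul_sub_le_sub_of_le_hasDerivAt {c : ℝ} (hu : ∀ t ∈ Icc a b, HasDerivAt u (u' t) t)
    (hc : ∀ t ∈ Ioo a b, c ≤ u' t) : ∀ t ∈ Icc a b, c * (t - a) ≤ u t - u a := by
  intro t ht
  have := sub_le_mul_sub_of_hasDerivAt_le (u := fun s => -u s) (C := -c)
    (fun s hs => (hu s hs).neg) (fun s hs => neg_le_neg (hc s hs)) t ht
  linarith

end Comparison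

section Trapezoid

variable {F f g : ℝ → ℝ} {a b : ℝ}

theorem continuousOn_trapezoidError (hab : a ≤ b) (hF : ContinuousOn F (Icc a b)) :
    ContinuousOn (trapezoidError F a) (Icc a b) := by
  have hprim : ContinuousOn (fun t => ∫ u in a..t, F u) (Icc a b) := by
    simpa [uIcc_of_le hab] using intervalIntegral.continuousOn_primitive_interval
      (μ := MeasureTheory.volume) (a := a) (b := b)
      (by simpa [uIcc_of_le hab] using hF.integrableOn_Icc)
  unfold trapezoidError
  fun_prop

theorem hasDerivAt_trapezoidError_right (hF : ContinuousOn F (Icc a b)) {t : ℝ}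
    (ht : t ∈ Ioo a b) (hFt : HasDerivAt F (f t) t) :
    HasDerivAt (trapezoidError F a) (f t * (t - a) / 2 - (F t - F a) / 2) t := by
  have hint : HasDerivAt (fun s => ∫ u in a..s, F u) (F t) t :=
    intervalIntegral.integral_hasDerivAt_right
      ((hF.mono (Icc_subset_Icc le_rfl ht.2.le)).intervalIntegrable_of_Icc ht.1.le)
      ((hF.mono Ioo_subset_Icc_self).stronglyMeasurableAtFilter isOpen_Ioo t ht)
      hFt.continuousAt
  have := (((hFt.add_const (F a)).const_mul (1 / 2 : ℝ)).mul
    ((hasDerivAt_id t).sub_const a)).sub hint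
  exact this.congr_deriv (by simp only [id_eq]; ring)

theorem trapezoidError_le {C : ℝ} (hab : a ≤ b) (hF : ∀ x ∈ Icc a b, HasDerivAt F (f x) x)
    (hf : ∀ x ∈ Icc a b, HasDerivAt f (g x) x)
    (hC : ∀ x ∈ Icc a b, g x - g a ≤ C * (x - a)) :
    trapezoidError F a b ≤ g a / 12 * (b - a) ^ 3 + C / 24 * (b - a) ^ 4 := by
  have hFc : ContinuousOn F (Icc a b) := fun x hx => (hF x hx).continuousAt.continuousWithinAt
  have hr'' (t : ℝ) (ht : t ∈ Icc a b) :
      HasDerivAt (fun s => f s * (s - a) / 2 - (F s - F a) / 2) (g t * (t - a) / 2) t := by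
    have := ((((hf t ht).mul ((hasDerivAt_id t).sub_const a)).div_const 2).sub
      (((hF t ht).sub_const (F a)).div_const 2))
    exact this.congr_deriv (by simp only [id_eq]; ring)
  have hP'' (t : ℝ) : HasDerivAt (fun s => g a / 4 * (s - a) ^ 2 + C / 6 * (s - a) ^ 3)
      (g a / 2 * (t - a) + C / 2 * (t - a) ^ 2) t := by
    have := ((((hasDerivAt_id t).sub_const a).pow 2).const_mul (g a / 4)).add
      ((((hasDerivAt_id t).sub_const a).pow 3).const_mul (C / 6))
    exact this.congr_deriv (by simp only [id_eq]; push_cast; ring)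
  have hP' (t : ℝ) : HasDerivAt (fun s => g a / 12 * (s - a) ^ 3 + C / 24 * (s - a) ^ 4)
      (g a / 4 * (t - a) ^ 2 + C / 6 * (t - a) ^ 3) t := by
    have := ((((hasDerivAt_id t).sub_const a).pow 3).const_mul (g a / 12)).add
      ((((hasDerivAt_id t).sub_const a).pow 4).const_mul (C / 24))
    exact this.congr_deriv (by simp only [id_eq]; push_cast; ring)
  have hr'_le : ∀ t ∈ Icc a b,
      f t * (t - a) / 2 - (F t - F a) / 2 ≤ g a / 4 * (t - a) ^ 2 + C / 6 * (t - a) ^ 3 :=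
    le_on_Icc_of_hasDerivAt_le
      (fun t ht => (hr'' t ht).continuousAt.continuousWithinAt) (by fun_prop)
      (fun t ht => hr'' t (Ioo_subset_Icc_self ht)) (fun t _ => hP'' t) (by simp)
      (fun t ht => by nlinarith [hC t (Ioo_subset_Icc_self ht), sub_pos.2 ht.1])
  exact le_on_Icc_of_hasDerivAt_le (continuousOn_trapezoidError hab hFc) (by fun_prop)
    (fun t ht => hasDerivAt_trapezoidError_right hFc ht (hF t (Ioo_subset_Icc_self ht)))
    (fun t _ => hP' t) (by simp [trapezoidError])
    (fun t ht => hr'_le t (Ioo_subset_Icc_self ht)) b (right_mem_Icc.2 hab)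

theorem le_trapezoidError {c : ℝ} (hab : a ≤ b) (hF : ∀ x ∈ Icc a b, HasDerivAt F (f x) x)
    (hf : ∀ x ∈ Icc a b, HasDerivAt f (g x) x)
    (hc : ∀ x ∈ Icc a b, c * (x - a) ≤ g x - g a) :
    g a / 12 * (b - a) ^ 3 + c / 24 * (b - a) ^ 4 ≤ trapezoidError F a b := by
  have := trapezoidError_le (F := fun x => -F x) (f := fun x => -f x) (g := fun x => -g x)
    (C := -c) hab (fun x hx => (hF x hx).neg) (fun x hx => (hf x hx).neg)
    (fun x hx => by linarith [hc x hx])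
  rw [trapezoidError_neg] at this
  linarith

theorem trapezoidError_div_le {g' : ℝ → ℝ} {C : ℝ} (hab : a < b)
    (hF : ∀ x ∈ Icc a b, HasDerivAt F (f x) x) (hf : ∀ x ∈ Icc a b, HasDerivAt f (g x) x)
    (hg : ∀ x ∈ Icc a b, HasDerivAt g (g' x) x) (hC : ∀ x ∈ Ioo a b, g' x ≤ C) :
    trapezoidError F a b / (b - a) ^ 3 ≤ g a / 12 + C / 24 * (b - a) := by
  have := trapezoidError_le hab.le hF hf (sub_le_mul_sub_of_hasDerivAt_le hg hC)
  rw [div_le_iff₀ (pow_pos (sub_pos.2 hab) 3)]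
  linarith

theorem le_trapezoidError_div {g' : ℝ → ℝ} {c : ℝ} (hab : a < b)
    (hF : ∀ x ∈ Icc a b, HasDerivAt F (f x) x) (hf : ∀ x ∈ Icc a b, HasDerivAt f (g x) x)
    (hg : ∀ x ∈ Icc a b, HasDerivAt g (g' x) x) (hc : ∀ x ∈ Ioo a b, c ≤ g' x) :
    g a / 12 + c / 24 * (b - a) ≤ trapezoidError F a b / (b - a) ^ 3 := by
  have := le_trapezoidError hab.le hF hf (mul_sub_le_sub_of_le_hasDerivAt hg hc)
  rw [le_div_iff₀ (pow_pos (sub_pos.2 hab) 3)]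
  linarith

end Trapezoid

/-- Lemma 4.5: comparison of normalized trapezoid errors on adjacent intervals. -/
theorem stmt_15 (F f f' f'' : ℝ → ℝ) (a₀ a₁ a₂ : ℝ) (h01 : a₀ < a₁) (h12 : a₁ < a₂)
    (hF : ∀ x ∈ Set.Icc a₀ a₂, HasDerivAt F (f x) x)
    (hf : ∀ x ∈ Set.Icc a₀ a₂, HasDerivAt f (f' x) x)
    (hf' : ∀ x ∈ Set.Icc a₀ a₂, HasDerivAt f' (f'' x) x)
    (hf'' : ContinuousOn f'' (Set.Icc a₀ a₂))
    (rj rj1 Δj Δj1 : ℝ)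
    (hrj : rj = (1 / 2) * (F a₁ + F a₀) * (a₁ - a₀) - ∫ u in a₀..a₁, F u)
    (hrj1 : rj1 = (1 / 2) * (F a₂ + F a₁) * (a₂ - a₁) - ∫ u in a₁..a₂, F u)
    (hΔj : Δj = a₁ - a₀) (hΔj1 : Δj1 = a₂ - a₁) :
    ∃ x ∈ Set.Icc a₀ a₁,
      rj / Δj ^ 3 - rj1 / Δj1 ^ 3
        ≤ -(1 / 12) * f'' x * Δj
          + (1 / 24) * (sSup (f'' '' Set.Icc a₀ a₁) * Δj
              - sInf (f'' '' Set.Icc a₁ a₂) * Δj1) := by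
  obtain rfl : rj = trapezoidError F a₀ a₁ := hrj
  obtain rfl : rj1 = trapezoidError F a₁ a₂ := hrj1
  have sub₁ : Icc a₀ a₁ ⊆ Icc a₀ a₂ := Icc_subset_Icc_right h12.le
  have sub₂ : Icc a₁ a₂ ⊆ Icc a₀ a₂ := Icc_subset_Icc_left h01.le
  set C := sSup (f'' '' Icc a₀ a₁)
  set c := sInf (f'' '' Icc a₁ a₂)
  have hC (x : ℝ) (hx : x ∈ Ioo a₀ a₁) : f'' x ≤ C :=
    le_csSup (isCompact_Icc.image_of_continuousOn (hf''.mono sub₁)).bddAbove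
      (mem_image_of_mem f'' (Ioo_subset_Icc_self hx))
  have hc (x : ℝ) (hx : x ∈ Ioo a₁ a₂) : c ≤ f'' x :=
    csInf_le (isCompact_Icc.image_of_continuousOn (hf''.mono sub₂)).bddBelow
      (mem_image_of_mem f'' (Ioo_subset_Icc_self hx))
  have upper := trapezoidError_div_le h01 (fun x hx => hF x (sub₁ hx))
    (fun x hx => hf x (sub₁ hx)) (fun x hx => hf' x (sub₁ hx)) hC
  have lower := le_trapezoidError_div h12 (fun x hx => hF x (sub₂ hx))
    (fun x hx => hf x (sub₂ hx)) (fun x hx => hf' x (sub₂ hx)) hc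
  obtain ⟨x, hx, hslope⟩ := exists_hasDerivAt_eq_slope f' f'' h01
    (fun t ht => (hf' t (sub₁ ht)).continuousAt.continuousWithinAt)
    (fun t ht => hf' t (sub₁ (Ioo_subset_Icc_self ht)))
  have hmvt : f' a₁ - f' a₀ = f'' x * (a₁ - a₀) := by
    rw [hslope, div_mul_cancel₀ _ (sub_pos.2 h01).ne']
  refine ⟨x, Ioo_subset_Icc_self hx, ?_⟩
  subst hΔj hΔj1
  linarith
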